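/- arXiv:math/0602182 — 5 statements merged into one kernel-verified Lean document; each statement's English description precedes it below -/
import Mathlib

section
/- Let A = ⊕_{h=0}^{e} A_h be a standard graded Artinian Gorenstein k-algebra with A_e ≠ 0 and e ≥ 2, and set d := dim_k A and n := dim_k A₁ with n ≥ 1. Then exactly one of the following holds: either e = 2 and d = n + 2, or e ≥ 3 and d ≥ 2(n + 1). -/
/-- The socle of a commutative ring `A` relative to an ideal `m`:
the ideal of all elements annihilating `m`. -/
def socleOf {A : Type*} [CommRing A] (m : Ideal A) : Ideal A where
  carrier := {a : A | ∀ b ∈ m, a * b = 0}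
  add_mem' := by intro a b ha hb c hc; rw [add_mul, ha c hc, hb c hc, add_zero]
  zero_mem' := by intro c hc; rw [zero_mul]
  smul_mem' := by intro r a ha c hc; rw [smul_eq_mul, mul_assoc, ha c hc, mul_zero]

lemma finrank_finsetSup_eq_sum {k V : Type*} [Field k] [AddCommGroup V] [Module k V]
    [FiniteDimensional k V] {p : ℕ → Submodule k V} (hp : iSupIndep p)
    (s : Finset ℕ) :
    Module.finrank k ↥(s.sup p) = ∑ i ∈ s, Module.finrank k (p i) := by
  classical
  induction s using Finset.induction with
  | empty => simp
  | @insert a s ha ih =>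
      have hdisj : Disjoint (p a) (s.sup p) := by
        have := hp.disjoint_biSup (x := a) (y := (↑s : Set ℕ)) (by simpa using ha)
        rw [Finset.sup_eq_iSup]
        simpa using this
      rw [Finset.sup_insert, Finset.sum_insert ha, ← ih]
      have h2 := Submodule.finrank_sup_add_finrank_inf_eq (p a) (s.sup p)
      rw [hdisj.eq_bot] at h2
      simpa using h2

/-- Let `A = ⊕_{h=0}^e A_h` be a standard graded Artinian Gorenstein
`k`-algebra with `A_e ≠ 0` and `e ≥ 2`, and set `d := dim_k A`, `n := dim_k A₁` with
`n ≥ 1`.  Then exactly one of the following holds: either `e = 2` and `d = n + 2`,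
or `e ≥ 3` and `d ≥ 2(n + 1)`. -/
theorem graded_gorenstein_dichotomy
    (k A : Type*) [Field k] [IsAlgClosed k]
    (hchar2 : (2 : k) ≠ 0) (hchar3 : (3 : k) ≠ 0)
    [CommRing A] [Algebra k A] [FiniteDimensional k A]
    (𝒜 : ℕ → Submodule k A) [GradedAlgebra 𝒜] (e : ℕ)
    (htop : ∀ i, e < i → 𝒜 i = ⊥) (hAe : 𝒜 e ≠ ⊥) (he : 2 ≤ e)
    (hA0 : ∀ a ∈ 𝒜 0, ∃ c : k, a = algebraMap k A c)
    (hstd : ∀ i, 𝒜 (i + 1) = 𝒜 1 * 𝒜 i)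
    (hn : 1 ≤ Module.finrank k (𝒜 1))
    (hGor : Module.finrank k ((socleOf
        (Ideal.span (⋃ i ∈ {i : ℕ | 1 ≤ i}, (𝒜 i : Set A)))).restrictScalars k) = 1) :
    Xor'
      (e = 2 ∧ Module.finrank k A = Module.finrank k (𝒜 1) + 2)
      (3 ≤ e ∧ 2 * (Module.finrank k (𝒜 1) + 1) ≤ Module.finrank k A) := by
  classical
  set m : Ideal A := Ideal.span (⋃ i ∈ {i : ℕ | 1 ≤ i}, (𝒜 i : Set A)) with hm
  -- annihilation criterion for the maximal ideal
  have hann : ∀ a : A, (∀ i, 1 ≤ i → ∀ x ∈ 𝒜 i, a * x = 0) → ∀ b ∈ m, a * b = 0 := by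
    intro a ha b hb
    refine Submodule.span_induction ?_ ?_ ?_ ?_ hb
    · intro x hx
      simp only [Set.mem_iUnion, Set.mem_setOf_eq, SetLike.mem_coe] at hx
      obtain ⟨i, hi, hxi⟩ := hx
      exact ha i hi x hxi
    · simp
    · intro x y _ _ hx hy; rw [mul_add, hx, hy, add_zero]
    · intro r x _ hx; rw [smul_eq_mul, mul_left_comm, hx, mul_zero]
  have hInt := DirectSum.Decomposition.isInternal 𝒜
  have hInd := hInt.submodule_iSupIndep
  have hTop := hInt.submodule_iSup_eq_top
  have hzero : ∀ {i j : ℕ}, i ≠ j → ∀ x, x ∈ 𝒜 i → x ∈ 𝒜 j → x = 0 := by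
    intro i j hij x hxi hxj
    have hd := hInd i
    have hx2 : x ∈ ⨆ (l) (_ : l ≠ i), 𝒜 l :=
      Submodule.mem_iSup_of_mem j (Submodule.mem_iSup_of_mem (Ne.symm hij) hxj)
    exact Submodule.disjoint_def.mp hd x hxi hx2
  obtain ⟨z, hz, hz0⟩ := Submodule.ne_bot_iff _ |>.mp hAe
  haveI : Nontrivial A := ⟨⟨z, 0, hz0⟩⟩
  have h1mem : (1 : A) ∈ 𝒜 0 := SetLike.one_mem_graded 𝒜
  -- finrank of degree 0
  have h𝒜0 : 𝒜 0 = Submodule.span k {(1 : A)} := by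
    apply le_antisymm
    · intro a ha
      obtain ⟨c, rfl⟩ := hA0 a ha
      rw [Algebra.algebraMap_eq_smul_one]
      exact Submodule.smul_mem _ c (Submodule.mem_span_singleton_self 1)
    · rw [Submodule.span_singleton_le_iff_mem]; exact h1mem
  have hfr0 : Module.finrank k ↥(𝒜 0) = 1 := by
    rw [h𝒜0]; exact finrank_span_singleton one_ne_zero
  -- the socle equals the top graded piece
  have hAe_soc : 𝒜 e ≤ (socleOf m).restrictScalars k := by
    intro a ha
    show ∀ b ∈ m, a * b = 0
    refine hann a ?_
    intro i hi x hx
    have hmul : a * x ∈ 𝒜 (e + i) := SetLike.mul_mem_graded ha hx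
    rw [htop (e + i) (by omega)] at hmul
    exact hmul
  have hfre_pos : 0 < Module.finrank k ↥(𝒜 e) := by
    rcases Nat.eq_zero_or_pos (Module.finrank k ↥(𝒜 e)) with h | h
    · exact absurd (Submodule.finrank_eq_zero.mp h) hAe
    · exact h
  have hsoc_eq : 𝒜 e = (socleOf m).restrictScalars k :=
    Submodule.eq_of_le_of_finrank_le hAe_soc (by rw [hGor]; omega)
  have hfre : Module.finrank k ↥(𝒜 e) = 1 := by rw [hsoc_eq]; exact hGor
  -- key injectivity
  have hkey : ∀ a : A, a ∈ 𝒜 1 → (∀ x ∈ 𝒜 (e - 1), a * x = 0) → a = 0 := by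
    intro a ha1 hax
    by_contra h0
    set T : Set ℕ := {j | ∃ x ∈ 𝒜 j, a * x ≠ 0} with hT
    have hT0 : 0 ∈ T := ⟨1, h1mem, by simpa using h0⟩
    have hTb : ∀ j ∈ T, j < e - 1 := by
      intro j hj
      obtain ⟨x, hx, hax0⟩ := hj
      by_contra hjlt
      push_neg at hjlt
      rcases eq_or_lt_of_le hjlt with hj1 | hj2
      · exact hax0 (hax x (hj1 ▸ hx))
      · have hmul : a * x ∈ 𝒜 (1 + j) := SetLike.mul_mem_graded ha1 hx
        rw [htop (1 + j) (by omega)] at hmul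
        exact hax0 hmul
    have hbdd : BddAbove T := ⟨e, fun j hj => (hTb j hj).le.trans (by omega)⟩
    have hjT : sSup T ∈ T := Nat.sSup_mem ⟨0, hT0⟩ hbdd
    set j := sSup T with hjdef
    obtain ⟨x, hxj, hax0⟩ := hjT
    have hmax : ∀ j', j < j' → ∀ y ∈ 𝒜 j', a * y = 0 := by
      intro j' hj' y hy
      by_contra hne
      exact absurd (le_csSup hbdd ⟨y, hy, hne⟩) (not_le.mpr hj')
    have hsocmem : a * x ∈ (socleOf m).restrictScalars k := by
      show ∀ b ∈ m, a * x * b = 0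
      refine hann (a * x) ?_
      intro i hi s hs
      have hxs : x * s ∈ 𝒜 (j + i) := SetLike.mul_mem_graded hxj hs
      rw [mul_assoc]
      exact hmax (j + i) (by omega) _ hxs
    rw [← hsoc_eq] at hsocmem
    have hmul : a * x ∈ 𝒜 (1 + j) := SetLike.mul_mem_graded ha1 hxj
    have hjlt := hTb j ⟨x, hxj, hax0⟩
    exact hax0 (hzero (show 1 + j ≠ e by omega) _ hmul hsocmem)
  -- the multiplication pairing
  let φ : ↥(𝒜 1) →ₗ[k] (↥(𝒜 (e - 1)) →ₗ[k] ↥(𝒜 e)) :=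
    { toFun := fun a =>
        { toFun := fun b => ⟨a.1 * b.1, by
            have := SetLike.mul_mem_graded a.2 b.2
            rwa [show 1 + (e - 1) = e by omega] at this⟩
          map_add' := fun x y => by ext; simp [mul_add]
          map_smul' := fun c x => by ext; simp [Algebra.mul_smul_comm] }
      map_add' := fun x y => by ext b; simp [add_mul]
      map_smul' := fun c x => by ext b; simp [Algebra.smul_mul_assoc] }
  have hφinj : Function.Injective φ := by
    intro a b hab
    have h : ∀ x ∈ 𝒜 (e - 1), (a.1 - b.1) * x = 0 := by
      intro x hx
      have h2 := congrArg Subtype.val (DFunLike.congr_fun hab ⟨x, hx⟩)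
      have h3 : a.1 * x = b.1 * x := h2
      rw [sub_mul, h3, sub_self]
    exact Subtype.ext (sub_eq_zero.mp (hkey _ (sub_mem a.2 b.2) h))
  have hn_le : Module.finrank k ↥(𝒜 1) ≤ Module.finrank k ↥(𝒜 (e - 1)) := by
    have h := LinearMap.finrank_le_finrank_of_injective hφinj
    rwa [Module.finrank_linearMap, hfre, mul_one] at h
  -- dimension formula
  have hsum : Module.finrank k A = ∑ i ∈ Finset.range (e + 1), Module.finrank k ↥(𝒜 i) := by
    have htop' : (Finset.range (e + 1)).sup 𝒜 = ⊤ := by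
      rw [Finset.sup_eq_iSup]
      apply le_antisymm le_top
      rw [← hTop]
      refine iSup_le fun i => ?_
      rcases le_or_gt i e with h | h
      · exact le_iSup_of_le i (le_iSup_of_le (Finset.mem_range.mpr (by omega)) le_rfl)
      · rw [htop i h]; exact bot_le
    have h := finrank_finsetSup_eq_sum hInd (Finset.range (e + 1))
    rw [htop'] at h
    rw [← h, finrank_top]
  rcases eq_or_lt_of_le he with he2 | he3
  · -- e = 2
    left
    refine ⟨⟨he2.symm, ?_⟩, fun hc => by omega⟩
    subst he2
    rw [hsum]
    simp [Finset.sum_range_succ, hfr0, hfre]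
    omega
  · -- e ≥ 3
    right
    refine ⟨⟨he3, ?_⟩, fun hc => by omega⟩
    have hsub : ({0, 1, e - 1, e} : Finset ℕ) ⊆ Finset.range (e + 1) := by
      intro i hi
      simp only [Finset.mem_insert, Finset.mem_singleton] at hi
      simp only [Finset.mem_range]
      omega
    have hss : ∑ i ∈ ({0, 1, e - 1, e} : Finset ℕ), Module.finrank k ↥(𝒜 i)
        ≤ ∑ i ∈ Finset.range (e + 1), Module.finrank k ↥(𝒜 i) :=
      Finset.sum_le_sum_of_subset hsub
    have hcalc : ∑ i ∈ ({0, 1, e - 1, e} : Finset ℕ), Module.finrank k ↥(𝒜 i)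
        = Module.finrank k ↥(𝒜 0) + Module.finrank k ↥(𝒜 1)
          + Module.finrank k ↥(𝒜 (e - 1)) + Module.finrank k ↥(𝒜 e) := by
      rw [Finset.sum_insert (by simp; omega), Finset.sum_insert (by simp; omega),
        Finset.sum_insert (by simp; omega), Finset.sum_singleton]
      ring
    rw [hsum]
    omega
end

section
/- Let A be a local Artinian Gorenstein k-algebra with dim_k A = 6. Then the Hilbert function H(A) of A is one of the following five tuples: (1,1,1,1,1,1), (1,2,1,1,1), (1,3,1,1), (1,4,1), (1,2,2,1). -/
set_option synthInstance.maxHeartbeats 1000000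
set_option maxHeartbeats 1000000

/-- `dim_k 𝔪^i/𝔪^{i+1}`, realised as the `k`-dimension of the image of `𝔪^i` in
the quotient ring `A/𝔪^{i+1}`. -/
noncomputable def hilbOf (k : Type*) {A : Type*} [Field k] [CommRing A] [Algebra k A]
    (m : Ideal A) (i : ℕ) : ℕ :=
  Module.finrank k (((m ^ i).map (Ideal.Quotient.mk (m ^ (i + 1)))).restrictScalars k)

section Aux

set_option linter.unusedSectionVars false

variable {k A : Type*} [Field k] [CommRing A] [Algebra k A] [FiniteDimensional k A]

lemma aux_hilb_recurrence (m : Ideal A) (i : ℕ) :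
    Module.finrank k (((m ^ i).map (Ideal.Quotient.mk (m ^ (i + 1)))).restrictScalars k)
      + Module.finrank k ((m ^ (i+1)).restrictScalars k)
      = Module.finrank k ((m ^ i).restrictScalars k) := by
  classical
  set J : Ideal A := m ^ (i+1) with hJ
  have hle : J ≤ m ^ i := Ideal.pow_le_pow_right (Nat.le_succ i)
  let f : A →ₗ[k] A ⧸ J := (Ideal.Quotient.mkₐ k J).toLinearMap
  let g : ((m ^ i).restrictScalars k) →ₗ[k] A ⧸ J :=
    f.comp ((m ^ i).restrictScalars k).subtype
  have hrange : LinearMap.range g = ((m ^ i).map (Ideal.Quotient.mk J)).restrictScalars k := by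
    ext x
    simp only [LinearMap.mem_range, Submodule.restrictScalars_mem,
      Ideal.mem_map_iff_of_surjective _ Ideal.Quotient.mk_surjective]
    constructor
    · rintro ⟨⟨a, ha⟩, rfl⟩; exact ⟨a, ha, rfl⟩
    · rintro ⟨a, ha, rfl⟩; exact ⟨⟨a, ha⟩, rfl⟩
  have hker : LinearMap.ker g = Submodule.comap ((m ^ i).restrictScalars k).subtype
      (J.restrictScalars k) := by
    ext x
    simp only [LinearMap.mem_ker, Submodule.mem_comap, Submodule.restrictScalars_mem]
    show Ideal.Quotient.mk J x.1 = 0 ↔ _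
    exact Ideal.Quotient.eq_zero_iff_mem
  have h1 := LinearMap.finrank_range_add_finrank_ker g
  rw [hrange, hker] at h1
  rw [(Submodule.comapSubtypeEquivOfLe
    (show (J.restrictScalars k) ≤ (m ^ i).restrictScalars k from hle)).finrank_eq] at h1
  exact h1

lemma aux_finrank_quot_eq_one (m : Ideal A)
    (hres : Function.Bijective (algebraMap k (A ⧸ m))) :
    Module.finrank k (A ⧸ m) = 1 := by
  have e : k ≃ₗ[k] (A ⧸ m) :=
    LinearEquiv.ofBijective (Algebra.linearMap k (A ⧸ m)) hres
  rw [← e.finrank_eq, Module.finrank_self]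

lemma aux_hilb_zero (m : Ideal A)
    (hres : Function.Bijective (algebraMap k (A ⧸ m))) :
    Module.finrank k (((m ^ 0).map (Ideal.Quotient.mk (m ^ (0 + 1)))).restrictScalars k) = 1 := by
  have h1 : m ^ (0+1) = m := pow_one m
  have h0 : (m : Ideal A) ^ 0 = ⊤ := by rw [pow_zero, Ideal.one_eq_top]
  rw [h0, Ideal.map_top]
  rw [show (⊤ : Ideal (A ⧸ m ^ (0+1))).restrictScalars k = ⊤ from rfl, finrank_top]
  have : FiniteDimensional k (A ⧸ m ^ (0+1)) :=
    Module.Finite.of_surjective (Ideal.Quotient.mkₐ k _).toLinearMap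
      (Ideal.Quotient.mkₐ_surjective k _)
  rw [h1]
  exact aux_finrank_quot_eq_one m hres

lemma aux_exists_residue (m : Ideal A)
    (hres : Function.Bijective (algebraMap k (A ⧸ m))) (a : A) :
    ∃ c : k, a - algebraMap k A c ∈ m := by
  obtain ⟨c, hc⟩ := hres.2 (Ideal.Quotient.mk m a)
  refine ⟨c, ?_⟩
  have : Ideal.Quotient.mk m (a - algebraMap k A c) = 0 := by
    rw [map_sub, Ideal.Quotient.mk_algebraMap, hc, sub_self]
  exact Ideal.Quotient.eq_zero_iff_mem.mp this

lemma aux_pow_stab (m : Ideal A) (i : ℕ) (h : m ^ (i+1) = m ^ i) :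
    ∀ t, m ^ (i + t) = m ^ i := by
  intro t
  induction t with
  | zero => rfl
  | succ t ih =>
    have : m ^ (i + t + 1) = m ^ (i + t) * m := pow_succ m (i + t)
    rw [show i + (t+1) = i + t + 1 from rfl, this, ih, ← pow_succ, h]

lemma aux_finrank_pow_strict (m : Ideal A) {e i : ℕ} (hlev : m ^ e ≠ ⊥)
    (hlev' : m ^ (e+1) = ⊥) (hie : i ≤ e) :
    Module.finrank k ((m ^ (i+1)).restrictScalars k)
      < Module.finrank k ((m ^ i).restrictScalars k) := by
  have hle : m ^ (i+1) ≤ m ^ i := Ideal.pow_le_pow_right (Nat.le_succ i)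
  rcases lt_or_eq_of_le (Submodule.finrank_mono
      (show (m ^ (i+1)).restrictScalars k ≤ (m ^ i).restrictScalars k from hle)) with h | h
  · exact h
  exfalso
  have heq : m ^ (i+1) = m ^ i := by
    have := Submodule.eq_of_le_of_finrank_eq
      (show (m ^ (i+1)).restrictScalars k ≤ (m ^ i).restrictScalars k from hle) h
    exact Submodule.restrictScalars_injective k A A this
  have hbot : m ^ i = ⊥ := by
    have h2 := aux_pow_stab m i heq (e + 1 - i)
    rw [show i + (e + 1 - i) = e + 1 by omega, hlev'] at h2
    exact h2.symm
  exact hlev (le_bot_iff.mp (hbot ▸ Ideal.pow_le_pow_right hie))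

lemma aux_finrank_top_pow (m : Ideal A) {e : ℕ} (hlev : m ^ e ≠ ⊥) (hlev' : m ^ (e+1) = ⊥)
    (hGor : Module.finrank k ((socleOf m).restrictScalars k) = 1) :
    Module.finrank k ((m ^ e).restrictScalars k) = 1 := by
  have hsub : m ^ e ≤ socleOf m := by
    intro a ha b hb
    have : a * b ∈ m ^ (e+1) := by
      rw [pow_succ]
      exact Ideal.mul_mem_mul ha hb
    rw [hlev'] at this
    exact this
  have h1 : Module.finrank k ((m ^ e).restrictScalars k) ≤ 1 := by
    rw [← hGor]
    exact Submodule.finrank_mono hsub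
  have h2 : 0 < Module.finrank k ((m ^ e).restrictScalars k) := by
    rcases Nat.eq_zero_or_pos (Module.finrank k ((m ^ e).restrictScalars k)) with h | h
    · exfalso
      rw [Submodule.finrank_eq_zero] at h
      exact hlev (Submodule.restrictScalars_injective k A A (by simpa using h))
    · exact h
  omega

lemma aux_principal_bound (m : Ideal A)
    (hres : Function.Bijective (algebraMap k (A ⧸ m)))
    (h1 : Module.finrank k (((m ^ 1).map (Ideal.Quotient.mk (m ^ (1 + 1)))).restrictScalars k) = 1)
    (i : ℕ) :
    Module.finrank k (((m ^ i).map (Ideal.Quotient.mk (m ^ (i + 1)))).restrictScalars k) ≤ 1 := by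
  classical
  have quot_fd : ∀ I : Ideal A, FiniteDimensional k (A ⧸ I) := fun I =>
    Module.Finite.of_surjective (Ideal.Quotient.mkₐ k I).toLinearMap
      (Ideal.Quotient.mkₐ_surjective k I)
  set S1 := ((m ^ 1).map (Ideal.Quotient.mk (m ^ (1 + 1)))).restrictScalars k with hS1
  have : FiniteDimensional k (A ⧸ m ^ (1+1)) := quot_fd _
  have hS1ne : S1 ≠ ⊥ := by
    intro h; rw [h, finrank_bot] at h1; omega
  obtain ⟨v, hvS1, hvne⟩ := Submodule.ne_bot_iff _ |>.mp hS1ne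
  have hvS1' : v ∈ (m ^ 1).map (Ideal.Quotient.mk (m ^ (1 + 1))) := hvS1
  rw [Ideal.mem_map_iff_of_surjective _ Ideal.Quotient.mk_surjective] at hvS1'
  obtain ⟨x, hxm, hxv⟩ := hvS1'
  have hxm' : x ∈ m := by rwa [pow_one] at hxm
  have hspan : S1 = Submodule.span k {v} := by
    refine (Submodule.eq_of_le_of_finrank_le (Submodule.span_le.mpr ?_) ?_).symm
    · intro y hy; rcases hy with rfl; exact hvS1
    · rw [h1, finrank_span_singleton hvne]
  have hdec1 : ∀ q ∈ m, ∃ d : k, q - algebraMap k A d * x ∈ m ^ 2 := by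
    intro q hq
    have hq1 : Ideal.Quotient.mk (m ^ (1+1)) q ∈ S1 := by
      rw [hS1]
      exact Ideal.mem_map_of_mem _ (by rwa [pow_one])
    rw [hspan, Submodule.mem_span_singleton] at hq1
    obtain ⟨d, hd⟩ := hq1
    refine ⟨d, ?_⟩
    have : Ideal.Quotient.mk (m ^ (1+1)) (q - algebraMap k A d * x) = 0 := by
      rw [map_sub, ← hd, ← hxv, map_mul, Ideal.Quotient.mk_algebraMap,
        ← Algebra.smul_def, sub_self]
    exact Ideal.Quotient.eq_zero_iff_mem.mp this
  have claim : ∀ j : ℕ, ∀ a ∈ m ^ j, ∃ c : k, a - algebraMap k A c * x ^ j ∈ m ^ (j + 1) := by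
    intro j
    induction j with
    | zero =>
      intro a _
      obtain ⟨c, hc⟩ := aux_exists_residue m hres a
      exact ⟨c, by simpa [pow_one] using hc⟩
    | succ j ih =>
      intro a ha
      rw [pow_succ] at ha
      refine Submodule.mul_induction_on ha ?_ ?_
      · intro p hp q hq
        obtain ⟨c, hc⟩ := ih p hp
        obtain ⟨d, hd⟩ := hdec1 q hq
        refine ⟨c * d, ?_⟩
        have key : p * q - algebraMap k A (c * d) * x ^ (j + 1) =
            (algebraMap k A c * x ^ j) * (q - algebraMap k A d * x)
            + (p - algebraMap k A c * x ^ j) * q := by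
          rw [map_mul]; ring
        rw [key]
        apply Submodule.add_mem
        · have hx1 : algebraMap k A c * x ^ j ∈ m ^ j :=
            Ideal.mul_mem_left _ _ (Ideal.pow_mem_pow hxm' j)
          have := Ideal.mul_mem_mul hx1 hd
          rwa [show m ^ j * m ^ 2 = m ^ (j + 1 + 1) by rw [← pow_add]] at this
        · have := Ideal.mul_mem_mul hc hq
          rwa [← pow_succ] at this
      · rintro y z ⟨c, hc⟩ ⟨d, hd⟩
        refine ⟨c + d, ?_⟩
        have : y + z - algebraMap k A (c + d) * x ^ (j+1)
            = (y - algebraMap k A c * x ^ (j+1)) + (z - algebraMap k A d * x ^ (j+1)) := by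
          rw [map_add]; ring
        rw [this]
        exact Submodule.add_mem _ hc hd
  have : FiniteDimensional k (A ⧸ m ^ (i+1)) := quot_fd _
  set w : A ⧸ m ^ (i+1) := Ideal.Quotient.mk (m ^ (i+1)) (x ^ i) with hw
  have hle : ((m ^ i).map (Ideal.Quotient.mk (m ^ (i + 1)))).restrictScalars k
      ≤ Submodule.span k {w} := by
    intro s hs
    have hs' : s ∈ (m ^ i).map (Ideal.Quotient.mk (m ^ (i + 1))) := hs
    rw [Ideal.mem_map_iff_of_surjective _ Ideal.Quotient.mk_surjective] at hs'
    obtain ⟨a, ha, rfl⟩ := hs'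
    obtain ⟨c, hc⟩ := claim i a ha
    have : Ideal.Quotient.mk (m ^ (i+1)) a = c • w := by
      have h0 : Ideal.Quotient.mk (m ^ (i+1)) (a - algebraMap k A c * x ^ i) = 0 :=
        Ideal.Quotient.eq_zero_iff_mem.mpr hc
      rw [map_sub, map_mul, Ideal.Quotient.mk_algebraMap, sub_eq_zero] at h0
      rw [h0, hw, ← Algebra.smul_def]
    rw [this]
    exact Submodule.smul_mem _ _ (Submodule.mem_span_singleton_self w)
  calc Module.finrank k (((m ^ i).map (Ideal.Quotient.mk (m ^ (i + 1)))).restrictScalars k)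
      ≤ Module.finrank k (Submodule.span k {w}) := Submodule.finrank_mono hle
    _ ≤ 1 := by
        by_cases hw0 : w = 0
        · rw [hw0, Submodule.span_zero_singleton, finrank_bot]; omega
        · rw [finrank_span_singleton hw0]

end Aux

/-- Let `A` be a local Artinian Gorenstein `k`-algebra with
`dim_k A = 6` and level `e` (i.e. `𝔪^e ≠ 0` and `𝔪^{e+1} = 0`).  Then the Hilbert
function `H(A) = (dim 𝔪⁰/𝔪¹, …, dim 𝔪^e/𝔪^{e+1})` is one of the five tuples
`(1,1,1,1,1,1)`, `(1,2,1,1,1)`, `(1,3,1,1)`, `(1,4,1)`, `(1,2,2,1)`. -/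
theorem local_gorenstein_degree_six_hilbert_functions
    (k A : Type*) [Field k] [IsAlgClosed k]
    (hchar2 : (2 : k) ≠ 0) (hchar3 : (3 : k) ≠ 0)
    [CommRing A] [Algebra k A] [IsLocalRing A] [FiniteDimensional k A]
    (hres : Function.Bijective (algebraMap k (A ⧸ IsLocalRing.maximalIdeal A)))
    (hGor : Module.finrank k
      ((socleOf (IsLocalRing.maximalIdeal A)).restrictScalars k) = 1)
    (hd : Module.finrank k A = 6)
    (e : ℕ)
    (hlev : IsLocalRing.maximalIdeal A ^ e ≠ ⊥)
    (hlev' : IsLocalRing.maximalIdeal A ^ (e + 1) = ⊥) :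
    (List.ofFn fun i : Fin (e + 1) => hilbOf k (IsLocalRing.maximalIdeal A) i) ∈
      ([[1, 1, 1, 1, 1, 1], [1, 2, 1, 1, 1], [1, 3, 1, 1], [1, 4, 1], [1, 2, 2, 1]] :
        List (List ℕ)) := by
  classical
  set m : Ideal A := IsLocalRing.maximalIdeal A with hm
  set n : ℕ → ℕ := fun i => hilbOf k m i with hn
  set d : ℕ → ℕ := fun i => Module.finrank k ((m ^ i).restrictScalars k) with hdd
  have hrec : ∀ i, n i + d (i+1) = d i := fun i => aux_hilb_recurrence m i
  have hd0 : d 0 = 6 := by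
    show Module.finrank k ((m ^ 0).restrictScalars k) = 6
    have h0 : ((m : Ideal A) ^ 0).restrictScalars k = ⊤ := by
      rw [pow_zero, Ideal.one_eq_top]; rfl
    rw [h0, finrank_top]
    exact hd
  have hdtop : d (e+1) = 0 := by
    show Module.finrank k ((m ^ (e+1)).restrictScalars k) = 0
    have h0 : ((m : Ideal A) ^ (e+1)).restrictScalars k = ⊥ := by
      rw [hlev']; rfl
    rw [h0, finrank_bot]
  -- telescoping sum
  have htel : ∀ j, (∑ i ∈ Finset.range j, n i) + d j = d 0 := by
    intro j
    induction j with
    | zero => simp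
    | succ j ih => rw [Finset.sum_range_succ, add_assoc, hrec j, ih]
  have hsum : (∑ i ∈ Finset.range (e+1), n i) = 6 := by
    have := htel (e+1)
    rw [hdtop, hd0] at this
    omega
  have hn0 : n 0 = 1 := aux_hilb_zero m hres
  have hpos : ∀ i, i ≤ e → 1 ≤ n i := by
    intro i hie
    have h1 := hrec i
    have h2 : d (i+1) < d i := aux_finrank_pow_strict (k := k) m hlev hlev' hie
    omega
  have hde : d e = 1 := aux_finrank_top_pow m hlev hlev' hGor
  have hne : n e = 1 := by
    have := hrec e
    rw [hdtop, hde] at this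
    omega
  have hprin : n 1 = 1 → ∀ i, n i ≤ 1 := fun h i => aux_principal_bound m hres h i
  have he6 : e ≤ 5 := by
    by_contra h
    push_neg at h
    have hle : (∑ i ∈ Finset.range (e+1), 1) ≤ ∑ i ∈ Finset.range (e+1), n i :=
      Finset.sum_le_sum (fun i hi => hpos i (by
        simp only [Finset.mem_range] at hi; omega))
    rw [Finset.sum_const, Finset.card_range, smul_eq_mul, mul_one] at hle
    omega
  interval_cases e
  · -- e = 0
    simp only [Finset.sum_range_succ, Finset.sum_range_zero] at hsum
    omega
  · -- e = 1
    simp only [Finset.sum_range_succ, Finset.sum_range_zero] at hsum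
    omega
  · -- e = 2
    simp only [Finset.sum_range_succ, Finset.sum_range_zero] at hsum
    have g0 : hilbOf k m 0 = 1 := hn0
    have g2 : hilbOf k m 2 = 1 := hne
    have g1 : hilbOf k m 1 = 4 := by
      have h0 : n 1 = 4 := by omega
      exact h0
    norm_num [List.ofFn_succ, g0, g1, g2]
  · -- e = 3
    simp only [Finset.sum_range_succ, Finset.sum_range_zero] at hsum
    have hp1 := hpos 1 (by omega)
    have hp2 := hpos 2 (by omega)
    have g0 : hilbOf k m 0 = 1 := hn0
    have g3 : hilbOf k m 3 = 1 := hne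
    by_cases h1 : n 1 = 1
    · have := hprin h1 2
      omega
    · by_cases h2 : n 1 = 2
      · have h3 : n 2 = 2 := by omega
        have g1 : hilbOf k m 1 = 2 := h2
        have g2 : hilbOf k m 2 = 2 := h3
        norm_num [List.ofFn_succ, g0, g1, g2, g3]
      · have h3 : n 1 = 3 ∧ n 2 = 1 := by omega
        have g1 : hilbOf k m 1 = 3 := h3.1
        have g2 : hilbOf k m 2 = 1 := h3.2
        norm_num [List.ofFn_succ, g0, g1, g2, g3]
  · -- e = 4
    simp only [Finset.sum_range_succ, Finset.sum_range_zero] at hsum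
    have hp1 := hpos 1 (by omega)
    have hp2 := hpos 2 (by omega)
    have hp3 := hpos 3 (by omega)
    have g0 : hilbOf k m 0 = 1 := hn0
    have g4 : hilbOf k m 4 = 1 := hne
    by_cases h1 : n 1 = 1
    · have := hprin h1 2
      have := hprin h1 3
      omega
    · have h2 : n 1 = 2 ∧ n 2 = 1 ∧ n 3 = 1 := by omega
      have g1 : hilbOf k m 1 = 2 := h2.1
      have g2 : hilbOf k m 2 = 1 := h2.2.1
      have g3 : hilbOf k m 3 = 1 := h2.2.2
      norm_num [List.ofFn_succ, g0, g1, g2, g3, g4]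
  · -- e = 5
    simp only [Finset.sum_range_succ, Finset.sum_range_zero] at hsum
    have hp1 := hpos 1 (by omega)
    have hp2 := hpos 2 (by omega)
    have hp3 := hpos 3 (by omega)
    have hp4 := hpos 4 (by omega)
    have h2 : n 1 = 1 ∧ n 2 = 1 ∧ n 3 = 1 ∧ n 4 = 1 := by omega
    have g0 : hilbOf k m 0 = 1 := hn0
    have g1 : hilbOf k m 1 = 1 := h2.1
    have g2 : hilbOf k m 2 = 1 := h2.2.1
    have g3 : hilbOf k m 3 = 1 := h2.2.2.1
    have g4 : hilbOf k m 4 = 1 := h2.2.2.2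
    have g5 : hilbOf k m 5 = 1 := hne
    norm_num [List.ofFn_succ, g0, g1, g2, g3, g4, g5]
end

section
/- The k-algebras A₁^{sp} := k[x₁,x₂]/(x₂², x₁³) and A₂^{sp} := k[x₁,x₂]/(x₂² − x₁², x₁³) are not isomorphic as k-algebras. -/
/-!
In `A₁` the generator `x₂` is a square-zero element and `x₁` is nilpotent, and together they
generate the algebra. In `A₂` (characteristic `≠ 2`) the tangent cone `x₂² = x₁²` is the pair of
lines `x₂ = ±x₁`; restricting to each line gives a map `A₂ → k[t]/(t³)`, and a square-zero
element of `k[t]/(t³)` lies in `(t²)`. Hence the linear part of a square-zero element of `A₂`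
vanishes along both lines, so it lies in `𝔪²`. An isomorphism `A₁ ≅ A₂` would therefore make the
two-dimensional cotangent space `𝔪/𝔪²` of `A₂` spanned by the linear part of a single element.
-/

open MvPolynomial

/-- The ideal `(x₂², x₁³)` defining `A₁^{sp} = k[x₁,x₂]/(x₂², x₁³)`
(with `x₁ = X 0`, `x₂ = X 1`). -/
noncomputable def sp1Ideal (k : Type*) [Field k] : Ideal (MvPolynomial (Fin 2) k) :=
  Ideal.span {X 1 ^ 2, X 0 ^ 3}

/-- The ideal `(x₂² - x₁², x₁³)` defining `A₂^{sp} = k[x₁,x₂]/(x₂² - x₁², x₁³)`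
(with `x₁ = X 0`, `x₂ = X 1`). -/
noncomputable def sp2Ideal (k : Type*) [Field k] : Ideal (MvPolynomial (Fin 2) k) :=
  Ideal.span {X 1 ^ 2 - X 0 ^ 2, X 0 ^ 3}

theorem Prime.sq_dvd_of_pow_three_dvd_sq {M : Type*} [CommMonoidWithZero M] [IsCancelMulZero M]
    {p r : M} (hp : Prime p) (h : p ^ 3 ∣ r ^ 2) : p ^ 2 ∣ r := by
  obtain ⟨s, rfl⟩ : p ∣ r := hp.dvd_of_dvd_pow (dvd_trans (dvd_pow_self p three_ne_zero) h)
  have hs : p ∣ s ^ 2 := by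
    rw [pow_succ, mul_pow] at h
    exact (mul_dvd_mul_iff_left (pow_ne_zero 2 hp.ne_zero)).mp h
  obtain ⟨t, rfl⟩ := hp.dvd_of_dvd_pow hs
  exact ⟨t, by rw [sq, mul_assoc]⟩

theorem Submodule.span_singleton_ne_top_of_one_lt_finrank {K V : Type*} [DivisionRing K]
    [AddCommGroup V] [Module K V] (h : 1 < Module.finrank K V) (v : V) : (K ∙ v) ≠ ⊤ := by
  intro htop
  have hle := finrank_span_le_card (R := K) ({v} : Set V)
  rw [htop, finrank_top] at hle
  simp only [Set.toFinset_singleton, Finset.card_singleton] at hle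
  omega

theorem AlgHom.eq_zero_of_mem_span_pair {R A B : Type*} [CommSemiring R] [Semiring A]
    [Semiring B] [Algebra R A] [Algebra R B] (f : A →ₐ[R] B) {p q : A} (hp : f p = 0)
    (hq : f q = 0) : ∀ a ∈ Ideal.span {p, q}, f a = 0 := fun _ ha =>
  (Ideal.span_le (I := RingHom.ker f)).mpr (Set.pair_subset hp hq) ha

namespace TrivSqZeroExt

theorem fst_eq_zero_of_isNilpotent {R M : Type*} [CommSemiring R] [IsReduced R] [AddCommMonoid M]
    [Module R M] [Module Rᵐᵒᵖ M] [IsCentralScalar R M] {x : TrivSqZeroExt R M}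
    (hx : IsNilpotent x) : x.fst = 0 :=
  (hx.map (fstHom R R M)).eq_zero

theorem snd_mem_of_fst_X_eq_zero {σ R M : Type*} [CommSemiring R] [AddCommMonoid M]
    [Module R M] [Module Rᵐᵒᵖ M] [IsCentralScalar R M] {N : Submodule R M}
    (g : MvPolynomial σ R →ₐ[R] TrivSqZeroExt R M)
    (hfst : ∀ i, (g (X i)).fst = 0) (hsnd : ∀ i, (g (X i)).snd ∈ N) (p : MvPolynomial σ R) :
    (g p).snd ∈ N := by
  induction p using MvPolynomial.induction_on with
  | C a => simp [algebraMap_eq_inl]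
  | add p q hp hq => simpa using N.add_mem hp hq
  | mul_X p i hp =>
    rw [map_mul, snd_mul, hfst, MulOpposite.op_zero, zero_smul, add_zero]
    exact N.smul_mem _ (hsnd i)

end TrivSqZeroExt

section

variable (k : Type*) [Field k]

noncomputable def cubicToDualNumber :
    Polynomial k ⧸ Ideal.span {(Polynomial.X : Polynomial k) ^ 3} →ₐ[k] DualNumber k :=
  Ideal.Quotient.liftₐ _ (Polynomial.aeval DualNumber.eps) fun r hr => by
    obtain ⟨s, rfl⟩ := Ideal.mem_span_singleton'.mp hr
    simp [pow_succ, DualNumber.eps_mul_eps]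

theorem cubicToDualNumber_mk (r : Polynomial k) :
    cubicToDualNumber k (Ideal.Quotient.mk _ r) = Polynomial.aeval DualNumber.eps r := rfl

variable {k} in
theorem cubicToDualNumber_eq_zero_of_sq_eq_zero
    {v : Polynomial k ⧸ Ideal.span {(Polynomial.X : Polynomial k) ^ 3}} (hv : v ^ 2 = 0) :
    cubicToDualNumber k v = 0 := by
  obtain ⟨r, rfl⟩ := Ideal.Quotient.mk_surjective v
  rw [← map_pow, Ideal.Quotient.eq_zero_iff_mem, Ideal.mem_span_singleton] at hv
  obtain ⟨s, rfl⟩ := Polynomial.prime_X.sq_dvd_of_pow_three_dvd_sq hv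
  simp [cubicToDualNumber_mk, sq, DualNumber.eps_mul_eps]

/-- Restriction of `A₂` to the line `x₂ = c x₁` of its tangent cone. -/
noncomputable def sp2ToCubic (c : k) (hc : c ^ 2 = 1) :
    MvPolynomial (Fin 2) k ⧸ sp2Ideal k →ₐ[k]
      Polynomial k ⧸ Ideal.span {(Polynomial.X : Polynomial k) ^ 3} :=
  Ideal.Quotient.liftₐ _
    (aeval ![Ideal.Quotient.mk _ Polynomial.X, c • Ideal.Quotient.mk _ Polynomial.X])
    (AlgHom.eq_zero_of_mem_span_pair _ (by simp [smul_pow, hc])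
      (by
        simp only [map_pow, aeval_X, Matrix.cons_val_zero]
        rw [← map_pow, Ideal.Quotient.eq_zero_iff_mem]
        exact Ideal.mem_span_singleton_self _))

theorem sp2ToCubic_mk (c : k) (hc : c ^ 2 = 1) (p : MvPolynomial (Fin 2) k) :
    sp2ToCubic k c hc (Ideal.Quotient.mk _ p) =
      aeval ![Ideal.Quotient.mk _ Polynomial.X, c • Ideal.Quotient.mk _ Polynomial.X] p := rfl

/-- The quotient map `A₂ → A₂/𝔪² = k ⊕ 𝔪/𝔪²`, with `𝔪/𝔪² = k × k` spanned by `x₁, x₂`. -/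
noncomputable def sp2ToCotangent :
    MvPolynomial (Fin 2) k ⧸ sp2Ideal k →ₐ[k] TrivSqZeroExt k (k × k) :=
  Ideal.Quotient.liftₐ _ (aeval ![.inr (1, 0), .inr (0, 1)])
    (AlgHom.eq_zero_of_mem_span_pair _ (by simp [sq, TrivSqZeroExt.inr_mul_inr])
      (by simp [pow_succ, TrivSqZeroExt.inr_mul_inr]))

theorem sp2ToCotangent_mk (p : MvPolynomial (Fin 2) k) :
    sp2ToCotangent k (Ideal.Quotient.mk _ p) = aeval ![.inr (1, 0), .inr (0, 1)] p := rfl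

theorem cubicToDualNumber_comp_sp2ToCubic (c : k) (hc : c ^ 2 = 1) :
    (cubicToDualNumber k).comp (sp2ToCubic k c hc) =
      (TrivSqZeroExt.map (LinearMap.fst k k k + c • LinearMap.snd k k k)).comp
        (sp2ToCotangent k) := by
  apply Ideal.Quotient.algHom_ext
  apply MvPolynomial.algHom_ext
  intro i
  fin_cases i <;> simp [sp2ToCubic_mk, sp2ToCotangent_mk, cubicToDualNumber_mk]

variable {k}

theorem sp2ToCotangent_eq_zero_of_sq_eq_zero (h2 : (2 : k) ≠ 0)
    {z : MvPolynomial (Fin 2) k ⧸ sp2Ideal k} (hz : z ^ 2 = 0) : sp2ToCotangent k z = 0 := by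
  have hvanish (c : k) (hc : c ^ 2 = 1) :
      TrivSqZeroExt.map (LinearMap.fst k k k + c • LinearMap.snd k k k) (sp2ToCotangent k z) =
        0 := by
    rw [← AlgHom.comp_apply, ← cubicToDualNumber_comp_sp2ToCubic k c hc, AlgHom.comp_apply]
    exact cubicToDualNumber_eq_zero_of_sq_eq_zero (by rw [← map_pow, hz, map_zero])
  have hplus := hvanish 1 (one_pow 2)
  have hminus := hvanish (-1) (by norm_num)
  simp only [TrivSqZeroExt.ext_iff, TrivSqZeroExt.fst_map, TrivSqZeroExt.snd_map,
    TrivSqZeroExt.fst_zero, TrivSqZeroExt.snd_zero, LinearMap.add_apply, LinearMap.smul_apply,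
    LinearMap.fst_apply, LinearMap.snd_apply, Prod.ext_iff, Prod.fst_zero, Prod.snd_zero,
    smul_eq_mul, one_mul, neg_mul] at hplus hminus ⊢
  obtain ⟨hfst, hsum⟩ := hplus
  obtain ⟨-, hdiff⟩ := hminus
  refine ⟨hfst, mul_left_cancel₀ h2 ?_, mul_left_cancel₀ h2 ?_⟩
  · linear_combination hsum + hdiff
  · linear_combination hsum - hdiff

theorem sp1_mk_X_one_sq : Ideal.Quotient.mk (sp1Ideal k) (X 1) ^ 2 = 0 := by
  rw [← map_pow, Ideal.Quotient.eq_zero_iff_mem]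
  exact Ideal.subset_span (Set.mem_insert _ _)

theorem sp1_mk_X_zero_pow_three : Ideal.Quotient.mk (sp1Ideal k) (X 0) ^ 3 = 0 := by
  rw [← map_pow, Ideal.Quotient.eq_zero_iff_mem]
  exact Ideal.subset_span (Set.mem_insert_of_mem _ rfl)

theorem sp1_mk_X_isNilpotent (i : Fin 2) :
    IsNilpotent (Ideal.Quotient.mk (sp1Ideal k) (X i)) := by
  fin_cases i
  exacts [⟨3, sp1_mk_X_zero_pow_three⟩, ⟨2, sp1_mk_X_one_sq⟩]

end

theorem sp1_not_iso_sp2_general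
    (k : Type*) [Field k]
    (hchar2 : (2 : k) ≠ 0) :
    IsEmpty ((MvPolynomial (Fin 2) k ⧸ sp1Ideal k) ≃ₐ[k]
      (MvPolynomial (Fin 2) k ⧸ sp2Ideal k)) := by
  refine ⟨fun φ => ?_⟩
  let q := (sp2ToCotangent k).comp φ.toAlgHom
  let g := q.comp (Ideal.Quotient.mkₐ k (sp1Ideal k))
  have hfst (i : Fin 2) : (g (X i)).fst = 0 :=
    TrivSqZeroExt.fst_eq_zero_of_isNilpotent ((sp1_mk_X_isNilpotent i).map q)
  have hz : φ (Ideal.Quotient.mk _ (X 1)) ^ 2 = 0 := by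
    rw [← map_pow, sp1_mk_X_one_sq, map_zero]
  have hX1 : g (X 1) = 0 := sp2ToCotangent_eq_zero_of_sq_eq_zero hchar2 hz
  have hsnd (i : Fin 2) : (g (X i)).snd ∈ k ∙ (g (X 0)).snd := by
    fin_cases i
    exacts [Submodule.mem_span_singleton_self _, hX1 ▸ zero_mem _]
  refine Submodule.span_singleton_ne_top_of_one_lt_finrank (K := k)
    (by rw [Module.finrank_prod, Module.finrank_self]; norm_num) (g (X 0)).snd
    (eq_top_iff.mpr fun x _ => ?_)
  obtain ⟨p, hp⟩ := Ideal.Quotient.mk_surjective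
    (φ.symm (Ideal.Quotient.mk _ (C x.1 * X 0 + C x.2 * X 1)))
  simpa [g, q, hp, sp2ToCotangent_mk, TrivSqZeroExt.algebraMap_eq_inl] using
    TrivSqZeroExt.snd_mem_of_fst_X_eq_zero g hfst hsnd p

/-- The `k`-algebras `A₁^{sp} = k[x₁,x₂]/(x₂², x₁³)` and
`A₂^{sp} = k[x₁,x₂]/(x₂² - x₁², x₁³)` are not isomorphic as `k`-algebras. -/
theorem sp1_not_iso_sp2
    (k : Type*) [Field k] [IsAlgClosed k]
    (hchar2 : (2 : k) ≠ 0) (hchar3 : (3 : k) ≠ 0) :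
    IsEmpty ((MvPolynomial (Fin 2) k ⧸ sp1Ideal k) ≃ₐ[k]
      (MvPolynomial (Fin 2) k ⧸ sp2Ideal k)) :=
  sp1_not_iso_sp2_general k hchar2
end

section
/- There is no local Artinian Gorenstein k-algebra with Hilbert function (1,2,3,1); i.e., there is no local Artinian k-algebra A with maximal ideal 𝔪, residue field k, dim_k(𝔪/𝔪²) = 2, dim_k(𝔪²/𝔪³) = 3, dim_k 𝔪³ = 1, 𝔪⁴ = 0, and one-dimensional socle. -/
set_option synthInstance.maxHeartbeats 1000000
set_option maxHeartbeats 1000000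

/-! Lift a basis of `𝔪/𝔪²` to `x₁, …, x_r ∈ 𝔪`. Since `𝔪² · 𝔪² = 0`, an element of `𝔪²` killed by
every `xᵢ` kills all of `𝔪`, so `z ↦ (z xᵢ)ᵢ : 𝔪² → (𝔪³)ʳ` has kernel inside the socle. Hence
`dim 𝔪² ≤ H(1) · dim 𝔪³ + dim Soc(A) = 2 · 1 + 1 = 3`, whereas `dim 𝔪² = H(2) + dim 𝔪³ = 4`. -/

namespace Ideal

variable {k A : Type*} [Field k] [CommRing A] [Algebra k A] (m : Ideal A)

theorem finrank_pow_eq_hilbOf_add [FiniteDimensional k A] (n : ℕ) :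
    Module.finrank k ((m ^ n).restrictScalars k)
      = hilbOf k m n + Module.finrank k ((m ^ (n + 1)).restrictScalars k) := by
  let ψ := (Ideal.Quotient.mkₐ k (m ^ (n + 1))).toLinearMap.comp
    ((m ^ n).restrictScalars k).subtype
  have hker : LinearMap.ker ψ = ((m ^ (n + 1)).restrictScalars k).comap
      ((m ^ n).restrictScalars k).subtype := by
    ext z
    simp [ψ, Ideal.Quotient.eq_zero_iff_mem]
  have hrange : LinearMap.range ψ =
      ((m ^ n).map (Ideal.Quotient.mk (m ^ (n + 1)))).restrictScalars k := by
    ext w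
    simp [ψ, Ideal.mem_map_iff_of_surjective _ Ideal.Quotient.mk_surjective]
  have hle : (m ^ (n + 1)).restrictScalars k ≤ (m ^ n).restrictScalars k :=
    Ideal.pow_le_pow_right n.le_succ
  rw [← LinearMap.finrank_range_add_finrank_ker ψ, hrange, hker,
    (Submodule.comapSubtypeEquivOfLe hle).finrank_eq]
  rfl

theorem exists_fin_hilbOf_span_pow_mod_pow_succ [FiniteDimensional k A] (n : ℕ) :
    ∃ x : Fin (hilbOf k m n) → A, (∀ i, x i ∈ m ^ n) ∧
      ∀ b ∈ m ^ n, ∃ c : Fin (hilbOf k m n) → k, b - ∑ i, c i • x i ∈ m ^ (n + 1) := by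
  let W := ((m ^ n).map (Ideal.Quotient.mk (m ^ (n + 1)))).restrictScalars k
  let B : Module.Basis (Fin (hilbOf k m n)) k W := Module.finBasis k W
  have hlift : ∀ i, ∃ x ∈ m ^ n, Ideal.Quotient.mk (m ^ (n + 1)) x = B i :=
    fun i => (Ideal.mem_map_iff_of_surjective _ Ideal.Quotient.mk_surjective).1 (B i).2
  choose x hxm hx using hlift
  refine ⟨x, hxm, fun b hb => ?_⟩
  let v : W := ⟨_, Ideal.mem_map_of_mem (Ideal.Quotient.mk (m ^ (n + 1))) hb⟩
  refine ⟨B.repr v, ?_⟩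
  rw [← Ideal.Quotient.eq_zero_iff_mem, map_sub, sub_eq_zero]
  have hsum := congrArg Subtype.val (B.sum_repr v)
  simp only [Submodule.coe_sum, Submodule.coe_smul, ← hx] at hsum
  rw [← Ideal.Quotient.mkₐ_eq_mk k, map_sum]
  simpa [map_smul] using hsum.symm

theorem mem_socleOf_of_mul_eq_zero {r j : ℕ} {x : Fin r → A} {c : A}
    (hspan : ∀ b ∈ m, ∃ a : Fin r → k, b - ∑ i, a i • x i ∈ m ^ 2)
    (hvan : m ^ (j + 2) = ⊥) (hc : c ∈ m ^ j) (hcx : ∀ i, c * x i = 0) :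
    c ∈ socleOf m := by
  intro b hb
  obtain ⟨a, ha⟩ := hspan b hb
  have hrest : c * (b - ∑ i, a i • x i) = 0 := by
    rw [← Ideal.mem_bot, ← hvan, pow_add]
    exact Ideal.mul_mem_mul hc ha
  calc c * b = c * (b - ∑ i, a i • x i) + ∑ i, a i • (c * x i) := by
        simp only [mul_sub, Finset.mul_sum, mul_smul_comm]; ring
    _ = 0 := by simp [hrest, hcx]

theorem finrank_pow_le_hilbOf_mul_add_finrank_socleOf [FiniteDimensional k A] {j : ℕ}
    (hvan : m ^ (j + 2) = ⊥) :
    Module.finrank k ((m ^ j).restrictScalars k) ≤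
      hilbOf k m 1 * Module.finrank k ((m ^ (j + 1)).restrictScalars k)
        + Module.finrank k ((socleOf m).restrictScalars k) := by
  obtain ⟨x, hxm, hspan⟩ := m.exists_fin_hilbOf_span_pow_mod_pow_succ (k := k) 1
  simp only [pow_one, Nat.reduceAdd] at hxm hspan
  set M := (m ^ j).restrictScalars k
  set N := (m ^ (j + 1)).restrictScalars k
  let φ : M →ₗ[k] Fin (hilbOf k m 1) → N := LinearMap.pi fun i =>
    (LinearMap.mulRight k (x i)).restrict fun c hc => by
      show c * x i ∈ m ^ (j + 1)
      rw [pow_succ]; exact Ideal.mul_mem_mul hc (hxm i)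
  have hker : (LinearMap.ker φ).map M.subtype ≤ (socleOf m).restrictScalars k := by
    rintro _ ⟨c, hc, rfl⟩
    refine m.mem_socleOf_of_mul_eq_zero hspan hvan c.2 fun i => ?_
    simpa [φ] using congrArg Subtype.val (congrFun (LinearMap.mem_ker.1 hc) i)
  have hrange : Module.finrank k (LinearMap.range φ) ≤ hilbOf k m 1 * Module.finrank k N := by
    simpa [Module.finrank_pi_fintype] using Submodule.finrank_le (LinearMap.range φ)
  have hker' := Submodule.finrank_mono hker
  rw [Submodule.finrank_map_subtype_eq] at hker'
  have := LinearMap.finrank_range_add_finrank_ker φ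
  omega

end Ideal

theorem no_local_gorenstein_hilbert_1231_general
    (k A : Type*) [Field k]
    [CommRing A] [Algebra k A] [IsLocalRing A] [FiniteDimensional k A]
    (hH1 : hilbOf k (IsLocalRing.maximalIdeal A) 1 = 2)
    (hH2 : hilbOf k (IsLocalRing.maximalIdeal A) 2 = 3)
    (hH3 : Module.finrank k ((IsLocalRing.maximalIdeal A ^ 3).restrictScalars k) = 1)
    (hlev : IsLocalRing.maximalIdeal A ^ 4 = ⊥)
    (hGor : Module.finrank k
      ((socleOf (IsLocalRing.maximalIdeal A)).restrictScalars k) = 1) :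
    False := by
  have hdim := (IsLocalRing.maximalIdeal A).finrank_pow_eq_hilbOf_add (k := k) 2
  have hbound := (IsLocalRing.maximalIdeal A).finrank_pow_le_hilbOf_mul_add_finrank_socleOf
    (k := k) (j := 2) hlev
  rw [hH2, hH3] at hdim
  rw [hH1, hH3, hGor, hdim] at hbound
  omega

/-- There is no local Artinian Gorenstein `k`-algebra with Hilbert
function `(1,2,3,1)`: there is no local Artinian `k`-algebra `A` with maximal ideal `𝔪`,
residue field `k`, `dim_k 𝔪/𝔪² = 2`, `dim_k 𝔪²/𝔪³ = 3`, `dim_k 𝔪³ = 1`, `𝔪⁴ = 0`, and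
one-dimensional socle. -/
theorem no_local_gorenstein_hilbert_1231
    (k A : Type*) [Field k] [IsAlgClosed k]
    (hchar2 : (2 : k) ≠ 0) (hchar3 : (3 : k) ≠ 0)
    [CommRing A] [Algebra k A] [IsLocalRing A] [FiniteDimensional k A]
    (hres : Function.Bijective (algebraMap k (A ⧸ IsLocalRing.maximalIdeal A)))
    (hH1 : hilbOf k (IsLocalRing.maximalIdeal A) 1 = 2)
    (hH2 : hilbOf k (IsLocalRing.maximalIdeal A) 2 = 3)
    (hH3 : Module.finrank k ((IsLocalRing.maximalIdeal A ^ 3).restrictScalars k) = 1)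
    (hlev : IsLocalRing.maximalIdeal A ^ 4 = ⊥)
    (hGor : Module.finrank k
      ((socleOf (IsLocalRing.maximalIdeal A)).restrictScalars k) = 1) :
    False :=
  no_local_gorenstein_hilbert_1231_general k A hH1 hH2 hH3 hlev hGor
end

section
/- Let I ⊆ k[x₁,x₂,x₃,x₄] be the ideal generated by x₁² − x₂, x₁³ − x₃, x₁⁴ − x₄, x₁⁶. Then these four generators form a regular sequence (the corresponding subscheme is a complete intersection in affine 4-space), the module I/I² is a free module of rank 4 over k[x₁,x₂,x₃,x₄]/I, and dim_k(I/I²) = 24. -/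
set_option synthInstance.maxHeartbeats 1000000
set_option maxHeartbeats 1000000

open MvPolynomial

/-- The affine ideal `I = (x₁² - x₂, x₁³ - x₃, x₁⁴ - x₄, x₁⁶)` of the projective model
of `spec(A_{1,6})` (with `x_i = X (i-1)`). -/
noncomputable def affineIdealA16 (k : Type*) [Field k] : Ideal (MvPolynomial (Fin 4) k) :=
  Ideal.span {X 0 ^ 2 - X 1, X 0 ^ 3 - X 2, X 0 ^ 4 - X 3, X 0 ^ 6}

/-!
The substitution `x₁ ↦ x₁, xᵢ ↦ x₁ⁱ - xᵢ` (i = 2, 3, 4) is an involutive automorphism of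
`k[x₁,…,x₄]` carrying the generators of `I` to `x₂, x₃, x₄, x₁⁶`: monomials in pairwise disjoint
sets of variables, hence a regular sequence. For a regular sequence `g₁, …, gₙ` every syzygy
`∑ cᵢ gᵢ = 0` has all `cᵢ ∈ I`, which makes the classes of the `gᵢ` a basis of `I/I²` over `R/I`.
Finally `R/I ≅ k[x]/(x⁶)`, so `dim_k I/I² = 6 · 4`.
-/

open RingTheory.Sequence

theorem Ideal.ofList_ofFn {R : Type*} [CommSemiring R] {n : ℕ} (g : Fin n → R) :
    Ideal.ofList (List.ofFn g) = Ideal.span (Set.range g) := by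
  rw [Ideal.ofList]
  congr 1
  ext
  simp [eq_comm]

theorem RingEquiv.isWeaklyRegular_map_iff {R S : Type*} [CommRing R] [CommRing S] (f : R ≃+* S)
    (rs : List R) : IsWeaklyRegular R rs ↔ IsWeaklyRegular S (rs.map f) :=
  AddEquiv.isWeaklyRegular_congr (e := f.toAddEquiv) <| List.forall₂_map_right_iff.mpr <|
    List.forall₂_same.mpr fun r _ x => map_mul f r x

theorem RingTheory.Sequence.IsWeaklyRegular.isRegular {R : Type*} [CommRing R] {rs : List R}
    (h : IsWeaklyRegular R rs) (hne : Ideal.ofList rs ≠ ⊤) : IsRegular R rs :=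
  ⟨h, by rw [smul_eq_mul, Ideal.mul_top]; exact hne.symm⟩

namespace MvPolynomial

variable {σ R : Type*}

theorem mem_span_monomial_of_monomial_mul_mem [CommSemiring R] {s : Set (σ →₀ ℕ)}
    {d : σ →₀ ℕ} (hd : ∀ e ∈ s, Disjoint d.support e.support) {p : MvPolynomial σ R}
    (h : monomial d 1 * p ∈ Ideal.span ((fun e => monomial e (1 : R)) '' s)) :
    p ∈ Ideal.span ((fun e => monomial e (1 : R)) '' s) := by
  rw [mem_ideal_span_monomial_image] at h ⊢
  intro m hm
  have hdm : d + m ∈ (monomial d 1 * p).support := by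
    rwa [mem_support_iff, coeff_monomial_mul, one_mul, ← mem_support_iff]
  obtain ⟨e, he, hle⟩ := h _ hdm
  refine ⟨e, he, fun j => ?_⟩
  by_cases hj : j ∈ e.support
  · have hdj : d j = 0 :=
      Finsupp.notMem_support_iff.mp (Finset.disjoint_right.mp (hd e he) hj)
    simpa [hdj] using hle j
  · simp [Finsupp.notMem_support_iff.mp hj]

theorem isWeaklyRegular_map_monomial [CommRing R] {ds : List (σ →₀ ℕ)}
    (hds : ds.Pairwise fun d e => Disjoint d.support e.support) :
    IsWeaklyRegular (MvPolynomial σ R) (ds.map fun d => monomial d (1 : R)) := by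
  refine ⟨fun i hi => (isSMulRegular_quotient_iff_mem_of_smul_mem _ _).mpr fun p hp => ?_⟩
  have hspan : Ideal.ofList ((ds.map fun d => monomial d (1 : R)).take i) =
      Ideal.span ((fun e => monomial e (1 : R)) '' {e | e ∈ ds.take i}) := by
    rw [Ideal.ofList, ← List.map_take]
    congr 1
    ext
    simp only [List.mem_map, Set.mem_image, Set.mem_ofPred_eq]
  rw [smul_eq_mul, Ideal.mul_top, hspan] at hp ⊢
  rw [List.getElem_map, smul_eq_mul] at hp
  refine mem_span_monomial_of_monomial_mul_mem (fun e he => ?_) hp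
  obtain ⟨j, hj, rfl⟩ := List.getElem_of_mem he
  rw [List.getElem_take]
  exact (List.pairwise_iff_getElem.mp hds _ _ _ _ (by simp at hj; omega)).symm

end MvPolynomial

theorem RingTheory.Sequence.IsWeaklyRegular.mem_span_of_sum_mul_eq_zero {R : Type*}
    [CommRing R] :
    ∀ {n : ℕ} {g : Fin n → R}, IsWeaklyRegular R (List.ofFn g) →
      ∀ {c : Fin n → R}, ∑ i, c i * g i = 0 → ∀ i, c i ∈ Ideal.span (Set.range g)
  | 0, _, _, _, _, i => i.elim0
  | n + 1, g, hg, c, hc, i => by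
    rw [List.ofFn_succ', List.concat_eq_append, isWeaklyRegular_append_iff,
      isWeaklyRegular_singleton_iff, isSMulRegular_quotient_iff_mem_of_smul_mem,
      smul_eq_mul, Ideal.mul_top, Ideal.ofList_ofFn] at hg
    obtain ⟨hinit, hlast⟩ := hg
    set J := Ideal.span (Set.range fun i : Fin n => g i.castSucc)
    rw [Fin.sum_univ_castSucc] at hc
    have hlastJ : c (Fin.last n) ∈ J := by
      refine hlast _ ?_
      rw [smul_eq_mul, mul_comm, eq_neg_of_add_eq_zero_right hc]
      exact J.neg_mem (J.sum_mem fun i _ => J.mul_mem_left _ (Ideal.subset_span ⟨i, rfl⟩))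
    obtain ⟨d, hd⟩ := (Submodule.mem_span_range_iff_exists_fun R).mp hlastJ
    have hJle : J ≤ Ideal.span (Set.range g) :=
      Ideal.span_mono (Set.range_comp_subset_range _ _)
    -- adding the Koszul relations `d i • (g last • eᵢ - g i • e_last)` clears the last coefficient
    have hsyz : ∑ i : Fin n, (c i.castSucc + d i * g (Fin.last n)) * g i.castSucc = 0 := by
      simp only [add_mul, Finset.sum_add_distrib]
      rw [← hc, ← hd]
      simp only [smul_eq_mul, Finset.sum_mul]
      congr 1
      exact Finset.sum_congr rfl fun i _ => by ring
    induction i using Fin.lastCases with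
    | last => exact hJle hlastJ
    | cast i =>
      have hshift := hJle (mem_span_of_sum_mul_eq_zero hinit hsyz i)
      have hg : g (Fin.last n) ∈ Ideal.span (Set.range g) := Ideal.subset_span ⟨_, rfl⟩
      simpa using sub_mem hshift (Ideal.mul_mem_left _ (d i) hg)

instance Ideal.Cotangent.isScalarTower_quotient {S R : Type*} [CommSemiring S] [CommRing R]
    [Algebra S R] (I : Ideal R) : IsScalarTower S (R ⧸ I) I.Cotangent where
  smul_assoc a b c := by
    obtain ⟨r, rfl⟩ := Ideal.Quotient.mk_surjective b
    rw [← Ideal.Quotient.mkₐ_eq_mk S, ← map_smul, Ideal.Quotient.mkₐ_eq_mk,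
      ← Ideal.Quotient.algebraMap_eq, algebraMap_smul, algebraMap_smul, smul_assoc]

theorem Ideal.sum_mk_smul_toCotangent {R ι : Type*} [CommRing R] [Fintype ι] (I : Ideal R)
    (r : ι → R) (x : ι → I) :
    ∑ i, Ideal.Quotient.mk I (r i) • I.toCotangent (x i) = I.toCotangent (∑ i, r i • x i) := by
  simp only [map_sum, map_smul, ← Ideal.Quotient.algebraMap_eq, algebraMap_smul]

theorem Ideal.top_le_span_range_toCotangent {R ι : Type*} [CommRing R] [Fintype ι] (g : ι → R) :
    ⊤ ≤ Submodule.span (R ⧸ Ideal.span (Set.range g)) (Set.range fun i =>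
      (Ideal.span (Set.range g)).toCotangent ⟨g i, Ideal.subset_span ⟨i, rfl⟩⟩) := by
  rintro x -
  obtain ⟨y, rfl⟩ := Ideal.toCotangent_surjective _ x
  obtain ⟨c, hc⟩ := (Submodule.mem_span_range_iff_exists_fun R).mp y.2
  rw [Submodule.mem_span_range_iff_exists_fun]
  refine ⟨Ideal.Quotient.mk _ ∘ c, ?_⟩
  rw [Function.comp_def, Ideal.sum_mk_smul_toCotangent]
  congr 1
  ext
  simpa using hc

theorem Ideal.finrank_restrictScalars_map_mk_sq {K R : Type*} [CommRing K] [CommRing R]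
    [Algebra K R] (I : Ideal R) :
    Module.finrank K ((I.map (Ideal.Quotient.mk (I ^ 2))).restrictScalars K) =
      Module.finrank K I.Cotangent := by
  rw [Ideal.map_eq_submodule_map]
  exact ((Submodule.restrictScalarsEquiv K _ _ I.cotangentIdeal).restrictScalars K).finrank_eq.trans
    (I.cotangentEquivIdeal.restrictScalars K).finrank_eq.symm

namespace RingTheory.Sequence.IsWeaklyRegular

variable {R : Type*} [CommRing R] {n : ℕ} {g : Fin n → R}

theorem linearIndependent_toCotangent (hg : IsWeaklyRegular R (List.ofFn g)) :
    LinearIndependent (R ⧸ Ideal.span (Set.range g))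
      fun i => (Ideal.span (Set.range g)).toCotangent ⟨g i, Ideal.subset_span ⟨i, rfl⟩⟩ := by
  set I := Ideal.span (Set.range g)
  rw [Fintype.linearIndependent_iff]
  intro c hc i
  obtain ⟨r, rfl⟩ : ∃ r : Fin n → R, (Ideal.Quotient.mk I ∘ r) = c :=
    (Ideal.Quotient.mk_surjective (I := I)).comp_left c
  have hsq : ∑ i, r i * g i ∈ I • Submodule.span R (Set.range g) := by
    rw [Ideal.smul_eq_mul, ← pow_two]
    simpa using (I.toCotangent_eq_zero _).mp ((I.sum_mk_smul_toCotangent r _).symm.trans hc)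
  obtain ⟨a, ha, hsum⟩ := (Submodule.mem_ideal_smul_span_iff_exists_sum I g _).mp hsq
  rw [Finsupp.sum_fintype _ _ (by simp)] at hsum
  have hsyz : ∑ i, (r i - a i) * g i = 0 := by
    simp only [smul_eq_mul] at hsum
    rw [← sub_eq_zero.mpr hsum.symm, ← Finset.sum_sub_distrib]
    simp only [sub_mul]
  simpa [Ideal.Quotient.eq_zero_iff_mem] using
    I.add_mem (hg.mem_span_of_sum_mul_eq_zero hsyz i) (ha i)

noncomputable def cotangentBasis (hg : IsWeaklyRegular R (List.ofFn g)) :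
    Module.Basis (Fin n) (R ⧸ Ideal.span (Set.range g)) (Ideal.span (Set.range g)).Cotangent :=
  .mk hg.linearIndependent_toCotangent (Ideal.top_le_span_range_toCotangent g)

end RingTheory.Sequence.IsWeaklyRegular

theorem AdjoinRoot.root_X_pow_pow {R : Type*} [CommRing R] (n : ℕ) :
    root (Polynomial.X ^ n : Polynomial R) ^ n = 0 := by
  simpa using AdjoinRoot.eval₂_root (Polynomial.X ^ n : Polynomial R)

namespace AffineA16

variable (k : Type*) [CommRing k]

noncomputable def generators : Fin 4 → MvPolynomial (Fin 4) k :=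
  ![X 0 ^ 2 - X 1, X 0 ^ 3 - X 2, X 0 ^ 4 - X 3, X 0 ^ 6]

theorem affineIdealA16_eq_span_range (k : Type*) [Field k] :
    affineIdealA16 k = Ideal.span (Set.range (generators k)) := by
  rw [affineIdealA16, generators]
  simp only [Matrix.range_cons, Matrix.range_empty, Set.union_empty, Set.singleton_union]

noncomputable def involution : MvPolynomial (Fin 4) k ≃ₐ[k] MvPolynomial (Fin 4) k :=
  have hinv : (aeval ![X 0, X 0 ^ 2 - X 1, X 0 ^ 3 - X 2, X 0 ^ 4 - X 3]).comp
      (aeval ![X 0, X 0 ^ 2 - X 1, X 0 ^ 3 - X 2, X 0 ^ 4 - X 3]) =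
        AlgHom.id k (MvPolynomial (Fin 4) k) := by
    ext i : 1
    fin_cases i <;> simp
  AlgEquiv.ofAlgHom _ _ hinv hinv

theorem isWeaklyRegular_generators :
    IsWeaklyRegular (MvPolynomial (Fin 4) k) (List.ofFn (generators k)) := by
  have hmap : (List.ofFn (generators k)).map (involution k).toRingEquiv =
      [Finsupp.single 1 1, Finsupp.single 2 1, Finsupp.single 3 1,
        Finsupp.single (0 : Fin 4) 6].map fun d => monomial d (1 : k) := by
    simp [involution, generators, ← X_pow_eq_monomial]
  rw [(involution k).toRingEquiv.isWeaklyRegular_map_iff, hmap]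
  exact isWeaklyRegular_map_monomial (by simp)

theorem mk_X_eq_mk_X_zero_pow (i : Fin 4) :
    Ideal.Quotient.mk (Ideal.span (Set.range (generators k))) (X i) =
      Ideal.Quotient.mk _ (X 0) ^ (i.val + 1) := by
  rw [← map_pow, eq_comm, Ideal.Quotient.mk_eq_mk_iff_sub_mem]
  fin_cases i
  · simp
  exacts [Ideal.subset_span ⟨0, rfl⟩, Ideal.subset_span ⟨1, rfl⟩, Ideal.subset_span ⟨2, rfl⟩]

theorem mk_X_zero_pow_six :
    Ideal.Quotient.mk (Ideal.span (Set.range (generators k))) (X 0) ^ 6 = 0 := by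
  rw [← map_pow, Ideal.Quotient.eq_zero_iff_mem]
  exact Ideal.subset_span ⟨3, rfl⟩

theorem aeval_root_pow_generators (i : Fin 4) :
    aeval (fun j : Fin 4 => AdjoinRoot.root (Polynomial.X ^ 6 : Polynomial k) ^ (j.val + 1))
      (generators k i) = 0 := by
  fin_cases i <;> simp [generators, AdjoinRoot.root_X_pow_pow]

noncomputable def quotientToAdjoinRoot :
    MvPolynomial (Fin 4) k ⧸ Ideal.span (Set.range (generators k)) →ₐ[k]
      AdjoinRoot (Polynomial.X ^ 6 : Polynomial k) :=
  Ideal.Quotient.liftₐ _ (aeval fun i : Fin 4 =>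
      AdjoinRoot.root (Polynomial.X ^ 6 : Polynomial k) ^ (i.val + 1)) fun _ ha =>
    RingHom.mem_ker.mp <| (Ideal.span_le.mpr <| Set.range_subset_iff.mpr fun i =>
      RingHom.mem_ker.mpr (aeval_root_pow_generators k i)) ha

theorem quotientToAdjoinRoot_mk (p : MvPolynomial (Fin 4) k) :
    quotientToAdjoinRoot k (Ideal.Quotient.mk _ p) =
      aeval (fun i : Fin 4 => AdjoinRoot.root (Polynomial.X ^ 6 : Polynomial k) ^ (i.val + 1)) p :=
  rfl

noncomputable def adjoinRootEquivQuotient :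
    AdjoinRoot (Polynomial.X ^ 6 : Polynomial k) ≃ₐ[k]
      MvPolynomial (Fin 4) k ⧸ Ideal.span (Set.range (generators k)) :=
  AlgEquiv.ofAlgHom
    (AdjoinRoot.liftAlgHom _ (Algebra.ofId k _) (Ideal.Quotient.mk _ (X 0))
      (by rw [Polynomial.eval₂_X_pow, mk_X_zero_pow_six]))
    (quotientToAdjoinRoot k)
    (Ideal.Quotient.algHom_ext _ <| MvPolynomial.algHom_ext fun i => by
      simp [quotientToAdjoinRoot_mk, mk_X_eq_mk_X_zero_pow k i])
    (AdjoinRoot.algHom_ext <| by simp [quotientToAdjoinRoot_mk])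

theorem finrank_quotient (k : Type*) [Field k] :
    Module.finrank k (MvPolynomial (Fin 4) k ⧸ Ideal.span (Set.range (generators k))) = 6 := by
  rw [← (adjoinRootEquivQuotient k).toLinearEquiv.finrank_eq,
    (AdjoinRoot.powerBasis' (Polynomial.monic_X_pow 6)).finrank]
  simp

end AffineA16

theorem affineIdealA16_complete_intersection_general
    (k : Type*) [Field k] :
    RingTheory.Sequence.IsRegular (MvPolynomial (Fin 4) k)
        [X 0 ^ 2 - X 1, X 0 ^ 3 - X 2, X 0 ^ 4 - X 3, (X 0 : MvPolynomial (Fin 4) k) ^ 6] ∧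
      Module.Free (MvPolynomial (Fin 4) k ⧸ affineIdealA16 k) (affineIdealA16 k).Cotangent ∧
      Module.finrank (MvPolynomial (Fin 4) k ⧸ affineIdealA16 k)
        (affineIdealA16 k).Cotangent = 4 ∧
      Module.finrank k
        (((affineIdealA16 k).map
          (Ideal.Quotient.mk ((affineIdealA16 k) ^ 2))).restrictScalars k) = 24 := by
  have hreg := AffineA16.isWeaklyRegular_generators k
  have hdim := AffineA16.finrank_quotient k
  have hnontriv :
      Nontrivial (MvPolynomial (Fin 4) k ⧸ Ideal.span (Set.range (AffineA16.generators k))) :=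
    Module.nontrivial_of_finrank_pos (R := k) (by omega)
  let b := hreg.cotangentBasis
  have hfree : Module.Free _ _ := .of_basis b
  rw [AffineA16.affineIdealA16_eq_span_range]
  refine ⟨hreg.isRegular ?_, hfree, ?_, ?_⟩
  · rw [Ideal.ofList_ofFn]
    exact Ideal.Quotient.nontrivial_iff.mp hnontriv
  · rw [Module.finrank_eq_card_basis b, Fintype.card_fin]
  · rw [Ideal.finrank_restrictScalars_map_mk_sq, ← Module.finrank_mul_finrank k
      (MvPolynomial (Fin 4) k ⧸ Ideal.span (Set.range (AffineA16.generators k))),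
      hdim, Module.finrank_eq_card_basis b, Fintype.card_fin]

/-- Let `I ⊆ k[x₁,x₂,x₃,x₄]` be the ideal generated by
`x₁² - x₂, x₁³ - x₃, x₁⁴ - x₄, x₁⁶`.  Then these four generators form a regular
sequence (the corresponding subscheme is a complete intersection in affine `4`-space),
`I/I²` is a free module of rank `4` over `k[x₁,…,x₄]/I`, and `dim_k I/I² = 24`
(realising `I/I²` as the image of `I` in `k[x₁,…,x₄]/I²`). -/
theorem affineIdealA16_complete_intersection
    (k : Type*) [Field k] [IsAlgClosed k]
    (hchar2 : (2 : k) ≠ 0) (hchar3 : (3 : k) ≠ 0) :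
    RingTheory.Sequence.IsRegular (MvPolynomial (Fin 4) k)
        [X 0 ^ 2 - X 1, X 0 ^ 3 - X 2, X 0 ^ 4 - X 3, (X 0 : MvPolynomial (Fin 4) k) ^ 6] ∧
      Module.Free (MvPolynomial (Fin 4) k ⧸ affineIdealA16 k) (affineIdealA16 k).Cotangent ∧
      Module.finrank (MvPolynomial (Fin 4) k ⧸ affineIdealA16 k)
        (affineIdealA16 k).Cotangent = 4 ∧
      Module.finrank k
        (((affineIdealA16 k).map
          (Ideal.Quotient.mk ((affineIdealA16 k) ^ 2))).restrictScalars k) = 24 :=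
  affineIdealA16_complete_intersection_general k
end
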